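/- arXiv:1311.4096 — 6 statements merged into one kernel-verified Lean document; each statement's English description precedes it below -/
import Mathlib

section
/- Let k ≥ 1, e1 > e2 ≥ k be integers, M > 0, α ≥ M/k, and β1 > 0 satisfy ∑_{i=0}^{k-1} min(α, (e1−i)β1) = M and α ≥ (e1−k+1)β1. Define β2 = ((e1−k+1)/(e2−k+1))·β1. Then ∑_{i=0}^{k-1} min(α, (e1−i)β1, (e2−i)β2) = M. -/
/-! For `i ≤ k - 1` the scaled capacity `(e2 - i) β2` already dominates `(e1 - i) β1`: clearing the
denominator, `(e2 - i)(e1 - k + 1) - (e1 - i)(e2 - k + 1) = (e1 - e2)(k - 1 - i) ≥ 0`. So the extra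
term never attains the minimum, and every summand is the one of the single-`d` min-cut sum. -/

lemma sub_mul_sub_add_one_le {a b s t : ℝ} (hba : b ≤ a) (hst : s + 1 ≤ t) :
    (a - s) * (b - t + 1) ≤ (b - s) * (a - t + 1) := by
  nlinarith [mul_nonneg (sub_nonneg.2 hba) (sub_nonneg.2 hst)]

lemma sub_mul_le_sub_mul_div_mul {a b s t β : ℝ} (hba : b ≤ a) (hst : s + 1 ≤ t) (htb : t ≤ b)
    (hβ : 0 ≤ β) : (a - s) * β ≤ (b - s) * ((a - t + 1) / (b - t + 1) * β) := by
  have hpos : 0 < b - t + 1 := by linarith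
  calc (a - s) * β = (a - s) * (b - t + 1) / (b - t + 1) * β := by field_simp
    _ ≤ (b - s) * (a - t + 1) / (b - t + 1) * β := by
      gcongr ?_ / _ * _; exact sub_mul_sub_add_one_le hba hst
    _ = (b - s) * ((a - t + 1) / (b - t + 1) * β) := by ring

theorem scaled_beta_feasible_general (k e1 e2 : ℕ) (M α β1 : ℝ)
    (hke2 : k ≤ e2) (he : e2 < e1) (hβ1 : 0 < β1)
    (hsum : ∑ i ∈ Finset.range k, min α (((e1 : ℝ) - i) * β1) = M) :
    ∑ i ∈ Finset.range k,
      min (min α (((e1 : ℝ) - i) * β1))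
        (((e2 : ℝ) - i) * (((e1 : ℝ) - k + 1) / ((e2 : ℝ) - k + 1) * β1)) = M := by
  rw [← hsum]
  refine Finset.sum_congr rfl fun i hi => min_eq_left ((min_le_right _ _).trans ?_)
  have hik : (i : ℝ) + 1 ≤ k := by exact_mod_cast Finset.mem_range.1 hi
  exact sub_mul_le_sub_mul_div_mul (by exact_mod_cast he.le) hik (by exact_mod_cast hke2) hβ1.le

/-- Scaling β1 by (e1−k+1)/(e2−k+1) preserves the min-cut sum at M. -/
theorem scaled_beta_feasible (k e1 e2 : ℕ) (M α β1 : ℝ)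
    (hk : 1 ≤ k) (hke2 : k ≤ e2) (he : e2 < e1) (hM : 0 < M)
    (hα : M / k ≤ α) (hβ1 : 0 < β1)
    (hsum : ∑ i ∈ Finset.range k, min α (((e1 : ℝ) - i) * β1) = M)
    (hαβ : ((e1 : ℝ) - k + 1) * β1 ≤ α) :
    ∑ i ∈ Finset.range k,
      min (min α (((e1 : ℝ) - i) * β1))
        (((e2 : ℝ) - i) * (((e1 : ℝ) - k + 1) / ((e2 : ℝ) - k + 1) * β1)) = M :=
  scaled_beta_feasible_general k e1 e2 M α β1 hke2 he hβ1 hsum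
end

section
/- Let k ≥ 1, e1 > e2 ≥ k be integers, M > 0, α ≥ M/k, β1 > 0 with ∑_{i=0}^{k-1} min(α, (e1−i)β1) = M and α ≥ (e1−k+1)β1. If β2 ≥ 0 satisfies ∑_{i=0}^{k-1} min(α, (e1−i)β1, (e2−i)β2) ≥ M, then β2 ≥ ((e1−k+1)/(e2−k+1))·β1. -/
/-! Capping the terms of the sum that defines `M` can only lower it, so `hfeas` forces every term
to be unaffected by the extra cap `(e2 - i) β2`. At `i = k - 1` the term is `(e1 - k + 1) β1`,
which gives `(e1 - k + 1) β1 ≤ (e2 - k + 1) β2`. -/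

theorem Finset.le_of_sum_le_sum_min {ι M : Type*} [AddCommMonoid M] [LinearOrder M]
    [IsOrderedCancelAddMonoid M] {s : Finset ι} {f g : ι → M}
    (h : ∑ i ∈ s, f i ≤ ∑ i ∈ s, min (f i) (g i)) {i : ι} (hi : i ∈ s) : f i ≤ g i := by
  have hle : ∀ j ∈ s, min (f j) (g j) ≤ f j := fun j _ => min_le_left _ _
  have hsum_eq : ∑ j ∈ s, min (f j) (g j) = ∑ j ∈ s, f j :=
    (Finset.sum_le_sum hle).antisymm h
  rw [← (Finset.sum_eq_sum_iff_of_le hle).mp hsum_eq i hi]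
  exact min_le_right _ _

theorem scaled_beta_optimal_general (k e1 e2 : ℕ) (M α β1 β2 : ℝ)
    (hk : 1 ≤ k) (hke2 : k ≤ e2)
    (hsum : ∑ i ∈ Finset.range k, min α (((e1 : ℝ) - i) * β1) = M)
    (hαβ : ((e1 : ℝ) - k + 1) * β1 ≤ α)
    (hfeas : M ≤ ∑ i ∈ Finset.range k,
      min (min α (((e1 : ℝ) - i) * β1)) (((e2 : ℝ) - i) * β2)) :
    ((e1 : ℝ) - k + 1) / ((e2 : ℝ) - k + 1) * β1 ≤ β2 := by
  have hlast : k - 1 ∈ Finset.range k := Finset.mem_range.mpr (by omega)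
  have hterm := Finset.le_of_sum_le_sum_min (hsum.trans_le hfeas) hlast
  have hcast : ((k - 1 : ℕ) : ℝ) = k - 1 := by push_cast [hk]; ring
  have hkey : ((e1 : ℝ) - k + 1) * β1 ≤ ((e2 : ℝ) - k + 1) * β2 := by
    rw [hcast, min_eq_right (by linarith)] at hterm
    linarith
  have hpos : (0 : ℝ) < (e2 : ℝ) - k + 1 := by
    have : (k : ℝ) ≤ e2 := by exact_mod_cast hke2
    linarith
  rw [div_mul_eq_mul_div, div_le_iff₀ hpos]
  linarith

/-- Converse: any feasible β2 must be at least the scaled value. -/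
theorem scaled_beta_optimal (k e1 e2 : ℕ) (M α β1 β2 : ℝ)
    (hk : 1 ≤ k) (hke2 : k ≤ e2) (he : e2 < e1) (hM : 0 < M)
    (hα : M / k ≤ α) (hβ1 : 0 < β1)
    (hsum : ∑ i ∈ Finset.range k, min α (((e1 : ℝ) - i) * β1) = M)
    (hαβ : ((e1 : ℝ) - k + 1) * β1 ≤ α)
    (hβ2 : 0 ≤ β2)
    (hfeas : M ≤ ∑ i ∈ Finset.range k,
      min (min α (((e1 : ℝ) - i) * β1)) (((e2 : ℝ) - i) * β2)) :
    ((e1 : ℝ) - k + 1) / ((e2 : ℝ) - k + 1) * β1 ≤ β2 :=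
  scaled_beta_optimal_general k e1 e2 M α β1 β2 hk hke2 hsum hαβ hfeas
end

section
/- Let k > 1, d ≥ k be integers, M > 0, and set α_o = M(d−k+2)/(k(d−k+2)−1). Let β* = β*(α) be the minimum β with ∑_{i=0}^{k-1} min(α, (d−i)β) ≥ M, for α in the range M/k ≤ α. Then for all α with M/k ≤ α ≤ α_o, we have α ≤ (d−k+2)·β*(α). -/
/-!
Only the feasibility of `β*` matters. Capping the first `k - 1` terms of the sum by `α` and the
last one by `(d - k + 1) β*` gives `M ≤ (k - 1) α + (d - k + 1) β*`, and below the threshold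
`α (k (d - k + 2) - 1) ≤ M (d - k + 2)`; the two are incompatible with `(d - k + 2) β* < α`.
-/

open Finset

theorem sum_range_succ_min_le (n : ℕ) (a : ℝ) (f : ℕ → ℝ) :
    ∑ i ∈ range (n + 1), min a (f i) ≤ n * a + f n := by
  rw [sum_range_succ]
  gcongr
  · simpa using sum_le_card_nsmul (range n) (fun i => min a (f i)) a fun _ _ => min_le_left _ _
  · exact min_le_right _ _

/-- Weighting the capacity bound by `e` and the failure `e * β < α` by `e - 1` overshoots the
threshold bound on `α`. -/
theorem le_mul_of_le_add_mul {M α β c e : ℝ} (he : 1 < e)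
    (hcap : M ≤ c * α + (e - 1) * β) (hα : α * ((c + 1) * e - 1) ≤ M * e) :
    α ≤ e * β := by
  by_contra! h
  nlinarith [mul_le_mul_of_nonneg_left hcap (by linarith : (0 : ℝ) ≤ e),
    mul_lt_mul_of_pos_left h (by linarith : (0 : ℝ) < e - 1)]

theorem alpha_le_threshold_beta_general (k d : ℕ) (M α βs : ℝ)
    (hk : 1 < k) (hd : k ≤ d)
    (hα2 : α ≤ M * ((d : ℝ) - k + 2) / (k * ((d : ℝ) - k + 2) - 1))
    (hleast : IsLeast {β : ℝ | 0 ≤ β ∧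
      M ≤ ∑ i ∈ Finset.range k, min α (((d : ℝ) - i) * β)} βs) :
    α ≤ ((d : ℝ) - k + 2) * βs := by
  obtain ⟨-, hcap⟩ := hleast.1
  obtain ⟨n, rfl⟩ : ∃ n, k = n + 1 := ⟨k - 1, by omega⟩
  have hd' : (n : ℝ) + 1 ≤ d := by exact_mod_cast hd
  have he : 1 < (d : ℝ) - (n + 1 : ℕ) + 2 := by push_cast; linarith
  have hden : 0 < ((n + 1 : ℕ) : ℝ) * ((d : ℝ) - (n + 1 : ℕ) + 2) - 1 := by
    push_cast; nlinarith
  rw [le_div_iff₀ hden] at hα2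
  refine le_mul_of_le_add_mul (c := n) he (hcap.trans ?_) (by push_cast at hα2 ⊢; linarith)
  refine (sum_range_succ_min_le n α (fun i => ((d : ℝ) - i) * βs)).trans_eq ?_
  push_cast
  ring

/-- Below the threshold α_o, the optimal bandwidth satisfies α ≤ (d−k+2)β*(α). -/
theorem alpha_le_threshold_beta (k d : ℕ) (M α βs : ℝ)
    (hk : 1 < k) (hd : k ≤ d) (hM : 0 < M)
    (hα1 : M / k ≤ α)
    (hα2 : α ≤ M * ((d : ℝ) - k + 2) / (k * ((d : ℝ) - k + 2) - 1))
    (hleast : IsLeast {β : ℝ | 0 ≤ β ∧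
      M ≤ ∑ i ∈ Finset.range k, min α (((d : ℝ) - i) * β)} βs) :
    α ≤ ((d : ℝ) - k + 2) * βs :=
  alpha_le_threshold_beta_general k d M α βs hk hd hα2 hleast
end

section
/- For k > 1, d ≥ k, M > 0, and α = α_o := M(d−k+2)/(k(d−k+2)−1), the value β = α_o/(d−k+2) satisfies ∑_{i=0}^{k-1} min(α_o, (d−i)β) = M; that is, at the threshold storage size, β*(α_o) = α_o/(d−k+2). -/
open Finset

/-- Only the last term `i = k - 1` falls below `d - k + 2`, and only by one. -/
theorem sum_range_min_sub_add_two (k : ℕ) (hk : 0 < k) (d : ℝ) :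
    ∑ i ∈ range k, min (d - k + 2) (d - i) = k * (d - k + 2) - 1 := by
  obtain ⟨m, rfl⟩ := Nat.exists_eq_add_of_lt hk
  have h_first : ∀ i ∈ range m, min (d - (m + 1 : ℕ) + 2) (d - i) = d - (m + 1 : ℕ) + 2 := by
    intro i hi
    have hi : (i : ℝ) + 1 ≤ m := by exact_mod_cast mem_range.mp hi
    exact min_eq_left (by push_cast; linarith)
  rw [zero_add, sum_range_succ, sum_congr rfl h_first, sum_const, card_range, nsmul_eq_mul,
    min_eq_right (by push_cast; linarith)]
  push_cast
  ring

theorem sum_range_min_mul_sub_add_two (k : ℕ) (hk : 0 < k) (d : ℝ) {β : ℝ} (hβ : 0 ≤ β) :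
    ∑ i ∈ range k, min ((d - k + 2) * β) ((d - i) * β) = (k * (d - k + 2) - 1) * β := by
  simp_rw [← min_mul_of_nonneg _ _ hβ, ← sum_mul, sum_range_min_sub_add_two k hk d]

/-- At the threshold storage α_o, β = α_o/(d−k+2) makes the min-cut sum exactly M. -/
theorem beta_at_threshold (k d : ℕ) (M : ℝ)
    (hk : 1 < k) (hd : k ≤ d) (hM : 0 < M) :
    ∑ i ∈ Finset.range k,
      min (M * ((d : ℝ) - k + 2) / (k * ((d : ℝ) - k + 2) - 1))
        (((d : ℝ) - i) *
          (M * ((d : ℝ) - k + 2) / (k * ((d : ℝ) - k + 2) - 1) / ((d : ℝ) - k + 2))) = M := by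
  set D : ℝ := (d : ℝ) - k + 2
  set α := M * D / (k * D - 1)
  have hD : 2 ≤ D := by
    have : (k : ℝ) ≤ d := by exact_mod_cast hd
    linarith
  have hden : 0 < k * D - 1 := by
    have : (2 : ℝ) ≤ k := by exact_mod_cast hk
    nlinarith
  set β := α / D
  have hβ : β = M / (k * D - 1) := by simp only [β, α]; field_simp
  have hα : α = D * β := by simp only [β]; field_simp
  rw [hα]
  calc _ = (k * D - 1) * β := sum_range_min_mul_sub_add_two k (by omega) d (by rw [hβ]; positivity)
    _ = M := by rw [hβ]; field_simp
end

section
/- Let M be an l×l real tridiagonal matrix with diagonal entries M_{r,r} = c_r·λ + b_r·μ (1 ≤ r ≤ l), superdiagonal entries M_{r,r+1} = −b_{r+1}·μ, and subdiagonal entries M_{r+1,r} = −c_r·λ, for real parameters λ, μ and sequences b_1,…,b_l and c_1,…,c_l. Then det(M) = ∑_{i=0}^{l} (b_1 b_2 ⋯ b_{l−i})·(c_{l−i+1} ⋯ c_l)·μ^{l−i}·λ^i, where empty products are 1. -/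
/-!
Expanding the determinant `D l` along its last row gives the three-term recursion
`D (l+2) = (c_{l+2} λ + b_{l+2} μ) D (l+1) - b_{l+2} μ c_{l+1} λ D l`, which telescopes to the
two-term recursion `D (l+1) = b_1 ⋯ b_{l+1} μ^{l+1} + c_{l+1} λ D l`. The closed form satisfies
the same recursion: splitting off its `i = 0` term leaves `c_{l+1} λ` times the closed form
for `l`.
-/

open Finset

namespace Matrix

variable {R : Type*} [CommRing R]

def tridiag (d sup sub : ℕ → R) (n : ℕ) : Matrix (Fin n) (Fin n) R :=
  of fun i j =>
    if (i : ℕ) = j then d i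
    else if (j : ℕ) = i + 1 then sup i
    else if (i : ℕ) = j + 1 then sub j
    else 0

variable (d sup sub : ℕ → R)

theorem tridiag_apply_self {n : ℕ} (i : Fin n) : tridiag d sup sub n i i = d i := by
  simp [tridiag]

theorem tridiag_apply_of_val_eq_add_one {n : ℕ} {i j : Fin n} (h : (i : ℕ) = j + 1) :
    tridiag d sup sub n i j = sub j := by
  simp only [tridiag, of_apply, h]
  split_ifs <;> first | rfl | omega

theorem tridiag_apply_eq_zero {n : ℕ} {i j : Fin n} (h : (i : ℕ) + 1 < j ∨ (j : ℕ) + 1 < i) :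
    tridiag d sup sub n i j = 0 := by
  simp only [tridiag, of_apply]
  split_ifs <;> first | rfl | omega

theorem tridiag_submatrix {m n : ℕ} (f g : Fin m → Fin n)
    (hf : ∀ i, (f i : ℕ) = i) (hg : ∀ j, (g j : ℕ) = j) :
    (tridiag d sup sub n).submatrix f g = tridiag d sup sub m := by
  ext i j
  simp only [tridiag, submatrix_apply, of_apply, hf, hg]

theorem tridiag_submatrix_castSucc (n : ℕ) :
    (tridiag d sup sub (n + 1)).submatrix Fin.castSucc Fin.castSucc = tridiag d sup sub n :=
  tridiag_submatrix d sup sub _ _ (fun _ => rfl) (fun _ => rfl)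

theorem det_tridiag_zero : (tridiag d sup sub 0).det = 1 := det_fin_zero

theorem det_tridiag_one : (tridiag d sup sub 1).det = d 0 := by
  simp [tridiag]

theorem det_tridiag_submatrix_succAbove_last_castSucc (n : ℕ) :
    ((tridiag d sup sub (n + 2)).submatrix (Fin.last (n + 1)).succAbove
      (Fin.last n).castSucc.succAbove).det = sup n * (tridiag d sup sub n).det := by
  rw [det_succ_column _ (Fin.last n), Fintype.sum_eq_single (Fin.last n)]
  · rw [submatrix_submatrix, (tridiag_submatrix d sup sub _ _ (fun i => by simp)
      (fun j => by simp [Fin.succAbove_castSucc_of_lt _ _ (Fin.castSucc_lt_last j)]) :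
        _ = tridiag d sup sub n)]
    simp [tridiag, ← two_mul]
  · intro i hi
    have : (i : ℕ) < n := Fin.val_lt_last hi
    rw [submatrix_apply, tridiag_apply_eq_zero, mul_zero, zero_mul]
    simp only [Fin.succAbove_last, Fin.succAbove_castSucc_self, Fin.val_castSucc, Fin.val_succ,
      Fin.val_last]
    omega

theorem det_tridiag_succ_succ (n : ℕ) :
    (tridiag d sup sub (n + 2)).det =
      d (n + 1) * (tridiag d sup sub (n + 1)).det
        - sup n * sub n * (tridiag d sup sub n).det := by
  rw [det_succ_row _ (Fin.last (n + 1)),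
    Fintype.sum_eq_add (Fin.last (n + 1)) (Fin.castSucc (Fin.last n)) ?_ ?_,
    det_tridiag_submatrix_succAbove_last_castSucc]
  · rw [Fin.succAbove_last, tridiag_submatrix_castSucc, tridiag_apply_self,
      tridiag_apply_of_val_eq_add_one _ _ _ (by simp)]
    have hlast : ((-1 : R) ^ (n + 1 + (n + 1))) = 1 := Even.neg_one_pow ⟨n + 1, rfl⟩
    have hprev : ((-1 : R) ^ (n + 1 + n)) = -1 := Odd.neg_one_pow ⟨n, by ring⟩
    simp only [Fin.val_last, Fin.val_castSucc, hlast, hprev]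
    ring
  · exact (Fin.castSucc_lt_last _).ne'
  · rintro j ⟨hj_last, hj_prev⟩
    have : (j : ℕ) < n := by
      rw [Ne, Fin.ext_iff] at hj_last hj_prev
      simp only [Fin.val_last, Fin.val_castSucc] at hj_last hj_prev
      omega
    rw [tridiag_apply_eq_zero _ _ _ (Or.inr (by simpa using this)), mul_zero, zero_mul]

end Matrix

open Matrix

section BirthDeath

variable {R : Type*} [CommRing R] (lam mu : R) (b c : ℕ → R)

def birthDeathMatrix (l : ℕ) : Matrix (Fin l) (Fin l) R :=
  tridiag (fun r => c (r + 1) * lam + b (r + 1) * mu) (fun r => -(b (r + 2) * mu))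
    (fun r => -(c (r + 1) * lam)) l

def birthDeathSum (l : ℕ) : R :=
  ∑ i ∈ range (l + 1),
    (∏ r ∈ Icc 1 (l - i), b r) * (∏ r ∈ Icc (l - i + 1) l, c r) * mu ^ (l - i) * lam ^ i

theorem of_eq_birthDeathMatrix (l : ℕ) :
    Matrix.of (fun i j : Fin l =>
      if (i : ℕ) = (j : ℕ) then c (i + 1) * lam + b (i + 1) * mu
      else if (j : ℕ) = (i : ℕ) + 1 then -(b ((j : ℕ) + 1) * mu)
      else if (i : ℕ) = (j : ℕ) + 1 then -(c ((j : ℕ) + 1) * lam)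
      else 0) = birthDeathMatrix lam mu b c l := by
  ext i j
  simp only [birthDeathMatrix, tridiag, of_apply]
  split_ifs with _ hsup
  all_goals first | rfl | rw [hsup]

theorem det_birthDeathMatrix_succ (l : ℕ) :
    (birthDeathMatrix lam mu b c (l + 1)).det =
      (∏ r ∈ Icc 1 (l + 1), b r) * mu ^ (l + 1)
        + c (l + 1) * lam * (birthDeathMatrix lam mu b c l).det := by
  induction l with
  | zero =>
    rw [birthDeathMatrix, birthDeathMatrix, det_tridiag_one, det_tridiag_zero]
    simp [add_comm]
  | succ l ih =>
    rw [birthDeathMatrix, det_tridiag_succ_succ, ← birthDeathMatrix, ← birthDeathMatrix, ih,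
      prod_Icc_succ_top (show 1 ≤ l + 1 + 1 by omega)]
    ring

theorem birthDeathSum_succ (l : ℕ) :
    birthDeathSum lam mu b c (l + 1) =
      (∏ r ∈ Icc 1 (l + 1), b r) * mu ^ (l + 1) + c (l + 1) * lam * birthDeathSum lam mu b c l := by
  rw [birthDeathSum, birthDeathSum, sum_range_succ', add_comm, mul_sum]
  congr 1
  · simp
  · refine sum_congr rfl fun i hi => ?_
    have hil : i ≤ l := Nat.lt_succ_iff.mp (mem_range.mp hi)
    rw [show l + 1 - (i + 1) = l - i by omega, prod_Icc_succ_top (by omega), pow_succ]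
    ring

theorem det_birthDeathMatrix (l : ℕ) :
    (birthDeathMatrix lam mu b c l).det = birthDeathSum lam mu b c l := by
  induction l with
  | zero => simp [birthDeathMatrix, birthDeathSum]
  | succ l ih => rw [det_birthDeathMatrix_succ, ih, birthDeathSum_succ]

end BirthDeath

open Finset in
/-- Determinant of the tridiagonal matrix from the MTTDL computation
(b, c are 1-indexed: entry (r,r) = c r * λ + b r * μ, etc.). -/
theorem tridiagonal_det (l : ℕ) (lam mu : ℝ) (b c : ℕ → ℝ) :
    Matrix.det (Matrix.of (fun i j : Fin l =>
      if (i : ℕ) = (j : ℕ) then c (i + 1) * lam + b (i + 1) * mu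
      else if (j : ℕ) = (i : ℕ) + 1 then -(b ((j : ℕ) + 1) * mu)
      else if (i : ℕ) = (j : ℕ) + 1 then -(c ((j : ℕ) + 1) * lam)
      else 0)) =
    ∑ i ∈ range (l + 1),
      (∏ r ∈ Icc 1 (l - i), b r) * (∏ r ∈ Icc (l - i + 1) l, c r) * mu ^ (l - i) * lam ^ i := by
  rw [of_eq_birthDeathMatrix]
  exact det_birthDeathMatrix lam mu b c l
end

section
/- Let k > 1, d2 ≥ k, d1 > d2, M > 0, and α satisfy M/k ≤ α ≤ M(d1−k+2)/(k(d1−k+2)−1). Let β1 = β*_{d1}(α) be the minimum β with ∑_{i=0}^{k-1} min(α,(d1−i)β) ≥ M. Then β2 := ((d1−k+1)/(d2−k+1))·β1 satisfies ∑_{i=0}^{k-1} min(α, (d2−i)β2) = M; that is, β*_{d2}(α) = ((d1−k+1)/(d2−k+1))·β*_{d1}(α) in this regime, and simultaneous optimality holds for both d1 and d2. -/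
/-!
Write `m = k - 1`. Below the threshold the optimal `β` for a helper-set size `d` leaves only the
last term of the cut-set sum unsaturated: `β*_d = (M - m α) / (d - m)`, all other terms being
equal to `α`. Saturation of the second-to-last term is exactly `α ≤ α_o(d)`, and `α_o(d)`
decreases in `d`, so the regime for `d1` is also the regime for `d2 < d1`. Since
`(d - m) β*_d = M - m α` does not depend on `d`, the two optima differ by the factor
`(d1 - m) / (d2 - m)`.
-/

open Finset

def cutSetBound (k : ℕ) (d α β : ℝ) : ℝ :=
  ∑ i ∈ range k, min α ((d - i) * β)

lemma cutSetBound_succ_le (m : ℕ) (d α β : ℝ) :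
    cutSetBound (m + 1) d α β ≤ m * α + (d - m) * β := by
  rw [cutSetBound, sum_range_succ]
  gcongr
  · calc ∑ i ∈ range m, min α ((d - i) * β) ≤ ∑ _i ∈ range m, α :=
          sum_le_sum fun _ _ => min_le_left _ _
      _ = m * α := by rw [sum_const, card_range, nsmul_eq_mul]
  · exact min_le_right _ _

lemma cutSetBound_succ_eq {m : ℕ} {d α β : ℝ} (hβ : 0 ≤ β) (hlast : (d - m) * β ≤ α)
    (hrest : α ≤ (d - m + 1) * β) :
    cutSetBound (m + 1) d α β = m * α + (d - m) * β := by
  have hsat : ∀ i ∈ range m, min α ((d - i) * β) = α := by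
    intro i hi
    have hi : (i : ℝ) + 1 ≤ m := by exact_mod_cast mem_range.mp hi
    exact min_eq_left (hrest.trans (by gcongr; linarith))
  rw [cutSetBound, sum_range_succ, sum_congr rfl hsat, min_eq_right hlast, sum_const,
    card_range, nsmul_eq_mul]

/-- Saturation of the second-to-last cut-set term at `β = (M - m α) / (d - m)`. -/
def BelowThreshold (m : ℕ) (d M α : ℝ) : Prop :=
  α * (d - m) ≤ (d - m + 1) * (M - m * α)

lemma belowThreshold_of_le_div {m : ℕ} {d M α : ℝ} (hd : (m : ℝ) < d)
    (hα : α ≤ M * (d - (m + 1) + 2) / ((m + 1) * (d - (m + 1) + 2) - 1)) :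
    BelowThreshold m d M α := by
  have hden : 0 < ((m : ℝ) + 1) * (d - (m + 1) + 2) - 1 := by nlinarith
  rw [le_div_iff₀ hden] at hα
  unfold BelowThreshold
  linarith

lemma BelowThreshold.mono {m : ℕ} {d d' M α : ℝ} (h : BelowThreshold m d M α) (hd : d' ≤ d)
    (hMα : M ≤ (m + 1) * α) : BelowThreshold m d' M α := by
  unfold BelowThreshold at h ⊢
  nlinarith [mul_nonneg (sub_nonneg.mpr hd) (sub_nonneg.mpr hMα)]

lemma BelowThreshold.mul_le {m : ℕ} {d M α : ℝ} (h : BelowThreshold m d M α)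
    (hd : (m : ℝ) < d) (hα : 0 ≤ α) : m * α ≤ M := by
  unfold BelowThreshold at h
  nlinarith [mul_nonneg hα (sub_nonneg.mpr hd.le)]

section Optimum

variable {m : ℕ} {d M α : ℝ}

lemma cutSetBound_eq_of_belowThreshold (h : BelowThreshold m d M α) (hd : (m : ℝ) < d)
    (hα : 0 ≤ α) (hMα : M ≤ (m + 1) * α) :
    cutSetBound (m + 1) d α ((M - m * α) / (d - m)) = M := by
  have hdm : 0 < d - m := sub_pos.mpr hd
  have hprod : (d - m) * ((M - m * α) / (d - m)) = M - m * α := mul_div_cancel₀ _ hdm.ne'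
  rw [cutSetBound_succ_eq (div_nonneg (sub_nonneg.mpr (h.mul_le hd hα)) hdm.le)
    (by linarith) (by rwa [← mul_div_assoc, le_div_iff₀ hdm]), hprod]
  ring

lemma isLeast_cutSetBound_of_belowThreshold (h : BelowThreshold m d M α) (hd : (m : ℝ) < d)
    (hα : 0 ≤ α) (hMα : M ≤ (m + 1) * α) :
    IsLeast {β | 0 ≤ β ∧ M ≤ cutSetBound (m + 1) d α β} ((M - m * α) / (d - m)) := by
  have hdm : 0 < d - m := sub_pos.mpr hd
  refine ⟨⟨div_nonneg (sub_nonneg.mpr (h.mul_le hd hα)) hdm.le,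
    (cutSetBound_eq_of_belowThreshold h hd hα hMα).ge⟩, fun β ⟨_, hβ⟩ => ?_⟩
  rw [div_le_iff₀' hdm]
  linarith [cutSetBound_succ_le m d α β]

end Optimum

/-- Theorem 2 ('no loss' direction): below the threshold α_o, the scaled bandwidth
β2 = ((d1−k+1)/(d2−k+1))β*₍d1₎(α) is exactly optimal for d2. -/
theorem no_loss_below_threshold (k d1 d2 : ℕ) (M α β1 : ℝ)
    (hk : 1 < k) (hkd2 : k ≤ d2) (hd : d2 < d1) (hM : 0 < M)
    (hα1 : M / k ≤ α)
    (hα2 : α ≤ M * ((d1 : ℝ) - k + 2) / (k * ((d1 : ℝ) - k + 2) - 1))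
    (hleast : IsLeast {β : ℝ | 0 ≤ β ∧
      M ≤ ∑ i ∈ Finset.range k, min α (((d1 : ℝ) - i) * β)} β1) :
    ∑ i ∈ Finset.range k,
      min α (((d2 : ℝ) - i) * (((d1 : ℝ) - k + 1) / ((d2 : ℝ) - k + 1) * β1)) = M := by
  obtain ⟨m, rfl⟩ := Nat.exists_eq_add_one.mpr (by omega : 0 < k)
  have hmd2 : (m : ℝ) < d2 := by exact_mod_cast hkd2
  have hd21 : (d2 : ℝ) ≤ d1 := by exact_mod_cast hd.le
  have hmd1 : (m : ℝ) < d1 := hmd2.trans_le hd21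
  push_cast at hα1 hα2 ⊢
  have hMα : M ≤ (m + 1) * α := by rwa [div_le_iff₀ (by positivity), mul_comm] at hα1
  have hα : 0 ≤ α := (div_pos hM (by positivity)).le.trans hα1
  have h1 : BelowThreshold m d1 M α := belowThreshold_of_le_div hmd1 hα2
  have hβ1 : β1 = (M - m * α) / (d1 - m) :=
    hleast.unique (isLeast_cutSetBound_of_belowThreshold h1 hmd1 hα hMα)
  have hscale :
      ((d1 : ℝ) - (m + 1) + 1) / (d2 - (m + 1) + 1) * β1 = (M - m * α) / (d2 - m) := by
    have hd1m : (d1 : ℝ) - m ≠ 0 := (sub_pos.mpr hmd1).ne'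
    have hd2m : (d2 : ℝ) - m ≠ 0 := (sub_pos.mpr hmd2).ne'
    rw [hβ1, show (d1 : ℝ) - (m + 1) + 1 = d1 - m by ring,
      show (d2 : ℝ) - (m + 1) + 1 = d2 - m by ring]
    field_simp
  rw [hscale]
  exact cutSetBound_eq_of_belowThreshold (h1.mono hd21 hMα) hmd2 hα hMα
end
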